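/- Let (X,ρ,W) be a uniformly convex hyperbolic space with modulus η non-increasing in r (for fixed ε), C ⊆ X nonempty convex, T : C → C nonexpansive, (λ_n) ⊆ [0,1], and (x_n) the Krasnoselski–Mann iteration from x ∈ C. Let y ∈ C, N ∈ ℕ, and b, c, γ, a > 0 with ρ(x,y) ≤ b, ρ(y,Ty) ≤ c, and for all n = 0,…,N: γ ≤ ρ(x_n,y) + ρ(y,Ty) and a ≤ ρ(x_n, T x_n). Let d ≥ (N+1)c. Then ρ(x_{N+1}, y) ≤ b + (N+1)c − 2γ·η(b+d, a/(b+d))·∑_{n=0}^{N} λ_n(1−λ_n). -/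
import Mathlib

section Aux

variable {X : Type*} [MetricSpace X] (W : X → X → ℝ → X)

lemma W_zero
    (W1 : ∀ x y z : X, ∀ l : ℝ, l ∈ Set.Icc (0:ℝ) 1 →
      dist z (W x y l) ≤ (1 - l) * dist z x + l * dist z y)
    (x y : X) : W x y 0 = x := by
  have h := W1 x y x 0 (by norm_num)
  simp at h
  exact h.symm

lemma W_one
    (W1 : ∀ x y z : X, ∀ l : ℝ, l ∈ Set.Icc (0:ℝ) 1 →
      dist z (W x y l) ≤ (1 - l) * dist z x + l * dist z y)
    (x y : X) : W x y 1 = y := by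
  have h := W1 x y y 1 (by norm_num)
  simp at h
  exact h.symm

lemma dist_W_left
    (W1 : ∀ x y z : X, ∀ l : ℝ, l ∈ Set.Icc (0:ℝ) 1 →
      dist z (W x y l) ≤ (1 - l) * dist z x + l * dist z y)
    (W2 : ∀ x y : X, ∀ l l' : ℝ, l ∈ Set.Icc (0:ℝ) 1 → l' ∈ Set.Icc (0:ℝ) 1 →
      dist (W x y l) (W x y l') = |l - l'| * dist x y)
    (x y : X) {l : ℝ} (hl : l ∈ Set.Icc (0:ℝ) 1) :
    dist (W x y l) x = l * dist x y := by
  have h := W2 x y l 0 hl (by norm_num)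
  rw [W_zero W W1 x y] at h
  rwa [sub_zero, abs_of_nonneg hl.1] at h

lemma dist_W_right
    (W1 : ∀ x y z : X, ∀ l : ℝ, l ∈ Set.Icc (0:ℝ) 1 →
      dist z (W x y l) ≤ (1 - l) * dist z x + l * dist z y)
    (W2 : ∀ x y : X, ∀ l l' : ℝ, l ∈ Set.Icc (0:ℝ) 1 → l' ∈ Set.Icc (0:ℝ) 1 →
      dist (W x y l) (W x y l') = |l - l'| * dist x y)
    (x y : X) {l : ℝ} (hl : l ∈ Set.Icc (0:ℝ) 1) :
    dist (W x y l) y = (1 - l) * dist x y := by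
  have h := W2 x y l 1 hl (by norm_num)
  rw [W_one W W1 x y] at h
  rwa [abs_of_nonpos (by linarith [hl.2] : l - 1 ≤ 0), neg_sub] at h

/-- In a uniformly convex W-hyperbolic space, a point metrically between `x` and `m`
with prescribed distances is unique. -/
lemma between_unique
    (W1 : ∀ x y z : X, ∀ l : ℝ, l ∈ Set.Icc (0:ℝ) 1 →
      dist z (W x y l) ≤ (1 - l) * dist z x + l * dist z y)
    (η : ℝ → ℝ → ℝ)
    (hη : ∀ r ε : ℝ, 0 < r → ε ∈ Set.Ioc (0:ℝ) 2 → η r ε ∈ Set.Ioc (0:ℝ) 1)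
    (hmod : ∀ r ε : ℝ, ∀ a u v : X, 0 < r → ε ∈ Set.Ioc (0:ℝ) 2 →
      dist u a ≤ r → dist v a ≤ r → ε * r ≤ dist u v →
      dist (W u v (1/2)) a ≤ (1 - η r ε) * r)
    {x m z s : X}
    (h1 : dist x z = dist x s) (h2 : dist z m = dist s m)
    (h3 : dist x z + dist z m = dist x m) : z = s := by
  by_contra hne
  have hδ : 0 < dist z s := dist_pos.mpr hne
  rcases (dist_nonneg : (0:ℝ) ≤ dist x z).eq_or_lt with he | hα
  · have hz : x = z := dist_eq_zero.mp he.symm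
    have hs : x = s := dist_eq_zero.mp (by rw [← h1]; exact he.symm)
    exact hne (by rw [← hz, ← hs])
  · have htri : dist z s ≤ dist x z + dist x s := by
      have := dist_triangle z x s
      rwa [dist_comm z x] at this
    have hεIoc : dist z s / dist x z ∈ Set.Ioc (0:ℝ) 2 := by
      constructor
      · exact div_pos hδ hα
      · rw [div_le_iff₀ hα]; linarith [h1.le, h1.ge]
    have hηpos : 0 < η (dist x z) (dist z s / dist x z) := (hη _ _ hα hεIoc).1
    have hm := hmod (dist x z) (dist z s / dist x z) x z s hα hεIoc
      (le_of_eq (dist_comm z x)) (le_of_eq ((dist_comm s x).trans h1.symm))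
      (le_of_eq (div_mul_cancel₀ _ hα.ne'))
    -- lower bound on dist x (W z s (1/2))
    have hwm := W1 z s m (1/2) (by norm_num)
    rw [dist_comm m z, dist_comm m s] at hwm
    have ht := dist_triangle x (W z s (1/2)) m
    rw [dist_comm (W z s (1/2)) m] at ht
    have hxw : dist x z ≤ dist x (W z s (1/2)) := by linarith
    rw [dist_comm (W z s (1/2)) x] at hm
    nlinarith [mul_pos hηpos hα]

/-- Scaling identity: a point at parameter `l ≤ 1/2` is the `2l`-point towards the midpoint. -/
lemma W_scale
    (W1 : ∀ x y z : X, ∀ l : ℝ, l ∈ Set.Icc (0:ℝ) 1 →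
      dist z (W x y l) ≤ (1 - l) * dist z x + l * dist z y)
    (W2 : ∀ x y : X, ∀ l l' : ℝ, l ∈ Set.Icc (0:ℝ) 1 → l' ∈ Set.Icc (0:ℝ) 1 →
      dist (W x y l) (W x y l') = |l - l'| * dist x y)
    (η : ℝ → ℝ → ℝ)
    (hη : ∀ r ε : ℝ, 0 < r → ε ∈ Set.Ioc (0:ℝ) 2 → η r ε ∈ Set.Ioc (0:ℝ) 1)
    (hmod : ∀ r ε : ℝ, ∀ a u v : X, 0 < r → ε ∈ Set.Ioc (0:ℝ) 2 →
      dist u a ≤ r → dist v a ≤ r → ε * r ≤ dist u v →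
      dist (W u v (1/2)) a ≤ (1 - η r ε) * r)
    (x y : X) {l : ℝ} (h0 : 0 ≤ l) (h12 : l ≤ 1/2) :
    W x y l = W x (W x y (1/2)) (2*l) := by
  have hmem : l ∈ Set.Icc (0:ℝ) 1 := ⟨h0, by linarith⟩
  have hmem2 : 2*l ∈ Set.Icc (0:ℝ) 1 := ⟨by linarith, by linarith⟩
  have hhalf : (1/2:ℝ) ∈ Set.Icc (0:ℝ) 1 := by norm_num
  have hm : dist x (W x y (1/2)) = (1/2) * dist x y := by
    rw [dist_comm]; exact dist_W_left W W1 W2 x y hhalf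
  refine between_unique W W1 η hη hmod (x := x) (m := W x y (1/2)) ?_ ?_ ?_
  · rw [dist_comm x (W x y l), dist_comm x (W x (W x y (1/2)) (2*l)),
      dist_W_left W W1 W2 x y hmem, dist_W_left W W1 W2 x _ hmem2, hm]
    ring
  · rw [W2 x y l (1/2) hmem hhalf, dist_W_right W W1 W2 x (W x y (1/2)) hmem2,
      hm, abs_of_nonpos (by linarith : l - 1/2 ≤ 0)]
    ring
  · rw [dist_comm x (W x y l), dist_W_left W W1 W2 x y hmem,
      W2 x y l (1/2) hmem hhalf, abs_of_nonpos (by linarith : l - 1/2 ≤ 0), hm]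
    ring

/-- Uniform convexity for arbitrary parameter λ with factor 2λ(1−λ). -/
lemma general_uc
    (W1 : ∀ x y z : X, ∀ l : ℝ, l ∈ Set.Icc (0:ℝ) 1 →
      dist z (W x y l) ≤ (1 - l) * dist z x + l * dist z y)
    (W2 : ∀ x y : X, ∀ l l' : ℝ, l ∈ Set.Icc (0:ℝ) 1 → l' ∈ Set.Icc (0:ℝ) 1 →
      dist (W x y l) (W x y l') = |l - l'| * dist x y)
    (W3 : ∀ x y : X, ∀ l : ℝ, l ∈ Set.Icc (0:ℝ) 1 → W x y l = W y x (1 - l))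
    (η : ℝ → ℝ → ℝ)
    (hη : ∀ r ε : ℝ, 0 < r → ε ∈ Set.Ioc (0:ℝ) 2 → η r ε ∈ Set.Ioc (0:ℝ) 1)
    (hmod : ∀ r ε : ℝ, ∀ a u v : X, 0 < r → ε ∈ Set.Ioc (0:ℝ) 2 →
      dist u a ≤ r → dist v a ≤ r → ε * r ≤ dist u v →
      dist (W u v (1/2)) a ≤ (1 - η r ε) * r)
    (r ε : ℝ) (a : X) (hr : 0 < r) (hε : ε ∈ Set.Ioc (0:ℝ) 2) :
    ∀ u v : X, ∀ l : ℝ, dist u a ≤ r → dist v a ≤ r → ε * r ≤ dist u v →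
      l ∈ Set.Icc (0:ℝ) 1 →
      dist (W u v l) a ≤ (1 - 2*l*(1-l)*(η r ε)) * r := by
  have hηpos : 0 < η r ε := (hη r ε hr hε).1
  have key : ∀ u v : X, ∀ l : ℝ, dist u a ≤ r → dist v a ≤ r → ε * r ≤ dist u v →
      0 ≤ l → l ≤ 1/2 → dist (W u v l) a ≤ (1 - 2*l*(1-l)*(η r ε)) * r := by
    intro u v l hu hv huv h0 h12
    rw [W_scale W W1 W2 η hη hmod u v h0 h12]
    have hmid := hmod r ε a u v hr hε hu hv huv
    have hW := W1 u (W u v (1/2)) a (2*l) ⟨by linarith, by linarith⟩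
    rw [dist_comm a u, dist_comm a (W u v (1/2))] at hW
    rw [dist_comm]
    have h1 : (1 - 2*l) * dist u a ≤ (1 - 2*l) * r :=
      mul_le_mul_of_nonneg_left hu (by linarith)
    have h2 : (2*l) * dist (W u v (1/2)) a ≤ (2*l) * ((1 - η r ε) * r) :=
      mul_le_mul_of_nonneg_left hmid (by linarith)
    nlinarith [hW, h1, h2, mul_nonneg (mul_nonneg h0 h0) (mul_pos hηpos hr).le]
  intro u v l hu hv huv hl
  rcases le_or_gt l (1/2) with h | h
  · exact key u v l hu hv huv hl.1 h
  · have h3 := key v u (1-l) hv hu (by rwa [dist_comm]) (by linarith [hl.2]) (by linarith)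
    rw [W3 u v l hl]
    calc dist (W v u (1-l)) a ≤ (1 - 2*(1-l)*(1-(1-l))*(η r ε)) * r := h3
      _ = (1 - 2*l*(1-l)*(η r ε)) * r := by ring

end Aux

theorem stmt_10
    {X : Type*} [MetricSpace X]
    (W : X → X → ℝ → X)
    (W1 : ∀ x y z : X, ∀ l : ℝ, l ∈ Set.Icc (0:ℝ) 1 →
      dist z (W x y l) ≤ (1 - l) * dist z x + l * dist z y)
    (W2 : ∀ x y : X, ∀ l l' : ℝ, l ∈ Set.Icc (0:ℝ) 1 → l' ∈ Set.Icc (0:ℝ) 1 →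
      dist (W x y l) (W x y l') = |l - l'| * dist x y)
    (W3 : ∀ x y : X, ∀ l : ℝ, l ∈ Set.Icc (0:ℝ) 1 → W x y l = W y x (1 - l))
    (W4 : ∀ x y z w : X, ∀ l : ℝ, l ∈ Set.Icc (0:ℝ) 1 →
      dist (W x z l) (W y w l) ≤ (1 - l) * dist x y + l * dist z w)
    (η : ℝ → ℝ → ℝ)
    (hη : ∀ r ε : ℝ, 0 < r → ε ∈ Set.Ioc (0:ℝ) 2 → η r ε ∈ Set.Ioc (0:ℝ) 1)
    (hmod : ∀ r ε : ℝ, ∀ a u v : X, 0 < r → ε ∈ Set.Ioc (0:ℝ) 2 →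
      dist u a ≤ r → dist v a ≤ r → ε * r ≤ dist u v →
      dist (W u v (1/2)) a ≤ (1 - η r ε) * r)
    (hdec : ∀ r s ε : ℝ, 0 < r → r ≤ s → ε ∈ Set.Ioc (0:ℝ) 2 → η s ε ≤ η r ε)
    (C : Set X) (hCne : C.Nonempty)
    (hconv : ∀ u ∈ C, ∀ v ∈ C, ∀ l : ℝ, l ∈ Set.Icc (0:ℝ) 1 → W u v l ∈ C)
    (T : X → X) (hT : ∀ u ∈ C, T u ∈ C)
    (hTne : ∀ u ∈ C, ∀ v ∈ C, dist (T u) (T v) ≤ dist u v)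
    (lam : ℕ → ℝ) (hlam : ∀ n, lam n ∈ Set.Icc (0:ℝ) 1)
    (x : X) (hx : x ∈ C)
    (xseq : ℕ → X) (hx0 : xseq 0 = x)
    (hxs : ∀ n, xseq (n + 1) = W (xseq n) (T (xseq n)) (lam n))
    : ∀ y ∈ C, ∀ N : ℕ, ∀ b c γ a d : ℝ,
      0 < b → 0 < c → 0 < γ → 0 < a →
      dist x y ≤ b → dist y (T y) ≤ c →
      (∀ n ≤ N, γ ≤ dist (xseq n) y + dist y (T y)) →
      (∀ n ≤ N, a ≤ dist (xseq n) (T (xseq n))) →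
      (N + 1 : ℝ) * c ≤ d →
      dist (xseq (N + 1)) y ≤
        b + (N + 1 : ℝ) * c -
          2 * γ * η (b + d) (a / (b + d)) *
            ∑ n ∈ Finset.range (N + 1), lam n * (1 - lam n) := by
  intro y hy N b c γ a d hb hc hγ ha hxy hyTy hγn han hd
  have hNc : (0:ℝ) < ((N:ℝ) + 1) * c := by positivity
  have hdpos : 0 < d := lt_of_lt_of_le hNc hd
  have hbd : 0 < b + d := by linarith
  set ε := a / (b + d) with hεdef
  set E := η (b + d) ε with hEdef
  -- membership of iterates
  have hxC : ∀ n, xseq n ∈ C := by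
    intro n
    induction n with
    | zero => rw [hx0]; exact hx
    | succ k ih => rw [hxs]; exact hconv _ ih _ (hT _ ih) _ (hlam k)
  have hTdist : ∀ n, dist (T (xseq n)) y ≤ dist (xseq n) y + c := by
    intro n
    have h1 := dist_triangle (T (xseq n)) (T y) y
    have h2 := hTne _ (hxC n) _ hy
    have h3 : dist (T y) y = dist y (T y) := dist_comm _ _
    linarith
  have hcoarse : ∀ n, dist (xseq (n+1)) y ≤ dist (xseq n) y + lam n * c := by
    intro n
    rw [hxs n, dist_comm]
    have hW := W1 (xseq n) (T (xseq n)) y (lam n) (hlam n)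
    rw [dist_comm y (xseq n), dist_comm y (T (xseq n))] at hW
    have h3 : lam n * dist (T (xseq n)) y ≤ lam n * (dist (xseq n) y + c) :=
      mul_le_mul_of_nonneg_left (hTdist n) (hlam n).1
    linarith
  have hgrow : ∀ n : ℕ, dist (xseq n) y ≤ b + n * c := by
    intro n
    induction n with
    | zero => simpa [hx0] using hxy
    | succ k ih =>
      have h1 := hcoarse k
      have h2 : lam k * c ≤ c := by nlinarith [(hlam k).1, (hlam k).2, hc.le]
      push_cast
      push_cast at ih
      linarith
  have hcd : c ≤ d := by nlinarith [mul_nonneg (Nat.cast_nonneg N : (0:ℝ) ≤ (N:ℝ)) hc.le]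
  have ha2 : a ≤ 2 * (b + d) := by
    have h1 := han 0 (Nat.zero_le N)
    have h2 := dist_triangle (xseq 0) y (T (xseq 0))
    have h3 := hTdist 0
    have h4 : dist (xseq 0) y ≤ b := by simpa [hx0] using hxy
    rw [dist_comm y (T (xseq 0))] at h2
    linarith
  have hεIoc : ε ∈ Set.Ioc (0:ℝ) 2 :=
    ⟨div_pos ha hbd, (div_le_iff₀ hbd).mpr (by linarith)⟩
  have hEpos : 0 < E := (hη (b+d) ε hbd hεIoc).1
  have hfine : ∀ n, n ≤ N →
      dist (xseq (n+1)) y ≤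
        dist (xseq n) y + c - 2 * γ * E * (lam n * (1 - lam n)) := by
    intro n hn
    have hg0 : (0:ℝ) ≤ dist (xseq n) y := dist_nonneg
    have hrpos : 0 < dist (xseq n) y + c := by linarith
    have hrle : dist (xseq n) y + c ≤ b + d := by
      have h1 := hgrow n
      have h2 : ((n:ℝ) + 1) * c ≤ ((N:ℝ) + 1) * c := by
        have hnN : (n:ℝ) ≤ (N:ℝ) := Nat.cast_le.mpr hn
        nlinarith [hc.le]
      linarith
    have hεr : ε * (dist (xseq n) y + c) ≤ dist (xseq n) (T (xseq n)) := by
      have h1 := han n hn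
      have h2 : ε * (dist (xseq n) y + c) ≤ ε * (b + d) :=
        mul_le_mul_of_nonneg_left hrle hεIoc.1.le
      have h3 : ε * (b + d) = a := by rw [hεdef]; exact div_mul_cancel₀ a hbd.ne'
      linarith
    have hkey := general_uc W W1 W2 W3 η hη hmod (dist (xseq n) y + c) ε y hrpos hεIoc
      (xseq n) (T (xseq n)) (lam n) (by linarith) (hTdist n) hεr (hlam n)
    have hmono : E ≤ η (dist (xseq n) y + c) ε := hdec _ _ ε hrpos hrle hεIoc
    have hγr : γ ≤ dist (xseq n) y + c := by
      have := hγn n hn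
      linarith
    have hll : 0 ≤ lam n * (1 - lam n) :=
      mul_nonneg (hlam n).1 (by linarith [(hlam n).2])
    have hprod : E * γ ≤ η (dist (xseq n) y + c) ε * (dist (xseq n) y + c) :=
      mul_le_mul hmono hγr hγ.le (hEpos.le.trans hmono)
    have h9 : (lam n * (1 - lam n)) * (E * γ) ≤
        (lam n * (1 - lam n)) * (η (dist (xseq n) y + c) ε * (dist (xseq n) y + c)) :=
      mul_le_mul_of_nonneg_left hprod hll
    rw [hxs n]
    nlinarith [hkey, h9]
  have hmain : ∀ M : ℕ, M ≤ N + 1 →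
      dist (xseq M) y ≤
        b + M * c - 2 * γ * E * (∑ n ∈ Finset.range M, lam n * (1 - lam n)) := by
    intro M
    induction M with
    | zero =>
      intro _
      simp only [Finset.range_zero, Finset.sum_empty, Nat.cast_zero, zero_mul, mul_zero,
        sub_zero, add_zero, hx0]
      exact hxy
    | succ k ih =>
      intro hk
      have hkN : k ≤ N := Nat.succ_le_succ_iff.mp hk
      have h1 := hfine k hkN
      have h2 := ih (Nat.le_of_succ_le hk)
      rw [Finset.sum_range_succ]
      push_cast
      push_cast at h2
      linarith
  have hfin := hmain (N+1) le_rfl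
  push_cast at hfin ⊢
  linarith
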